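/- arXiv:1202.5575 — 2 statements merged into one kernel-verified Lean document; each statement's English description precedes it below -/
import Mathlib

section
/- Existence of the global Whitney–Poisson structure: let Π_{ij} : ℝ^n → ℝ (1 ≤ i, j ≤ n) be smooth with Π_{ij} = −Π_{ji}, and suppose the bracket {f, g} = Σ_{i,j} Π_{ij} · (∂_i f) · (∂_j g) on C^∞(ℝ^n, ℝ) satisfies the Jacobi identity {{f,g},h} + {{h,f},g} + {{g,h},f} = 0 for all smooth f, g, h. Then for every closed X ⊆ ℝ^n the bracket descends to a well-defined ℝ-bilinear bracket on the quotient ring E^∞(X) = C^∞(ℝ^n,ℝ)/J^∞(X) which satisfies the Leibniz rule {F, GH} = {F,G}H + G{F,H} and the Jacobi identity {{F,G},H} + {{H,F},G} + {{G,H},F} = 0 for all F, G, H ∈ E^∞(X). -/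
/-
Each partial derivative `∂ᵢ` is a derivation of `C^∞(ℝⁿ)` that maps flat functions to flat
functions, i.e. preserves the ideal `J^∞(X)`. Hence `{f, g} = Σ Πᵢⱼ ∂ᵢf ∂ⱼg` lies in `J^∞(X)` as
soon as `f` or `g` does, so it descends to `E^∞(X)`. Bilinearity, the Leibniz rule and the Jacobi
identity are identities between representatives and pass to the quotient.
-/

open scoped ContDiff

noncomputable section

/-- A smooth function `f : ℝ^n → ℝ` is *flat* on `X` if all its iterated
(Fréchet) derivatives vanish at every point of `X`. -/
def IsFlatOn {n : ℕ} (X : Set (Fin n → ℝ)) (f : (Fin n → ℝ) → ℝ) : Prop :=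
  ∀ k : ℕ, ∀ x ∈ X, iteratedFDeriv ℝ k f x = 0

/-- The `i`-th partial derivative `∂_i f`. -/
def partialDeriv {n : ℕ} (i : Fin n) (f : (Fin n → ℝ) → ℝ) :
    (Fin n → ℝ) → ℝ :=
  fun x => fderiv ℝ f x (Pi.single i 1)

/-- The bracket `{f, g} = Σ_{i,j} Π_{ij} · (∂_i f) · (∂_j g)` associated to a matrix
`P = (Π_{ij})` of coefficient functions. -/
def pBracket {n : ℕ} (P : Fin n → Fin n → (Fin n → ℝ) → ℝ)
    (f g : (Fin n → ℝ) → ℝ) : (Fin n → ℝ) → ℝ :=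
  fun x => ∑ i : Fin n, ∑ j : Fin n, P i j x * partialDeriv i f x * partialDeriv j g x

/-- The ℝ-algebra `C^∞(ℝ^n, ℝ)` of smooth functions. -/
def smoothAlg (n : ℕ) : Subalgebra ℝ ((Fin n → ℝ) → ℝ) where
  carrier := {f | ContDiff ℝ ∞ f}
  mul_mem' {f g} hf hg := by
    exact ContDiff.mul (show ContDiff ℝ ∞ f from hf) (show ContDiff ℝ ∞ g from hg)
  add_mem' {f g} hf hg := by
    exact (show ContDiff ℝ ∞ f from hf).add (show ContDiff ℝ ∞ g from hg)
  algebraMap_mem' r := by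
    show ContDiff ℝ ∞ (fun _ : Fin n → ℝ => r)
    exact contDiff_const

theorem mem_smoothAlg {n : ℕ} {f : (Fin n → ℝ) → ℝ} (hf : f ∈ smoothAlg n) :
    ContDiff ℝ ∞ f := hf

/-- The ideal `J^∞(X)` of smooth functions flat on `X`. -/
def flatIdeal (n : ℕ) (X : Set (Fin n → ℝ)) : Ideal (smoothAlg n) where
  carrier := {f | IsFlatOn X (f : (Fin n → ℝ) → ℝ)}
  zero_mem' := by
    intro k x _
    show iteratedFDeriv ℝ k (fun _ => (0 : ℝ)) x = 0
    rw [iteratedFDeriv_zero_fun]; rfl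
  add_mem' := by
    intro f g hf hg k x hx
    show iteratedFDeriv ℝ k
      (fun y => (f : (Fin _ → ℝ) → ℝ) y + (g : (Fin _ → ℝ) → ℝ) y) x = 0
    rw [iteratedFDeriv_add_apply' ((mem_smoothAlg f.2).of_le (by exact_mod_cast le_top)).contDiffAt
      ((mem_smoothAlg g.2).of_le (by exact_mod_cast le_top)).contDiffAt, hf k x hx, hg k x hx, add_zero]
  smul_mem' := by
    intro c f hf k x hx
    show iteratedFDeriv ℝ k
      (fun y => (c : (Fin _ → ℝ) → ℝ) y * (f : (Fin _ → ℝ) → ℝ) y) x = 0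
    rw [← norm_le_zero_iff]
    refine le_trans (norm_iteratedFDeriv_mul_le (mem_smoothAlg c.2) (mem_smoothAlg f.2) x
      (by exact_mod_cast le_top)) ?_
    apply le_of_eq
    refine Finset.sum_eq_zero fun i _ => ?_
    rw [hf (k - i) x hx]
    simp

/-- The algebra `E^∞(X) = C^∞(ℝ^n,ℝ)/J^∞(X)` of Whitney functions on `X`. -/
abbrev Whitney (n : ℕ) (X : Set (Fin n → ℝ)) := smoothAlg n ⧸ flatIdeal n X

section DerivationBracket

open Finset

variable {R A ι : Type*} [CommRing R] [CommRing A] [Algebra R A] [Fintype ι]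
  (D : ι → Derivation R A A) (p : ι → ι → A)

def derivationBracket (f g : A) : A := ∑ i, ∑ j, p i j * D i f * D j g

theorem derivationBracket_add_left (f f' g : A) :
    derivationBracket D p (f + f') g = derivationBracket D p f g + derivationBracket D p f' g := by
  simp only [derivationBracket, map_add, mul_add, add_mul, sum_add_distrib]

theorem derivationBracket_add_right (f g g' : A) :
    derivationBracket D p f (g + g') = derivationBracket D p f g + derivationBracket D p f g' := by
  simp only [derivationBracket, map_add, mul_add, sum_add_distrib]

theorem derivationBracket_sub_left (f f' g : A) :
    derivationBracket D p (f - f') g = derivationBracket D p f g - derivationBracket D p f' g := by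
  simp only [derivationBracket, map_sub, mul_sub, sub_mul, sum_sub_distrib]

theorem derivationBracket_sub_right (f g g' : A) :
    derivationBracket D p f (g - g') = derivationBracket D p f g - derivationBracket D p f g' := by
  simp only [derivationBracket, map_sub, mul_sub, sum_sub_distrib]

theorem derivationBracket_smul_left (r : R) (f g : A) :
    derivationBracket D p (r • f) g = r • derivationBracket D p f g := by
  simp only [derivationBracket, Derivation.map_smul, mul_smul_comm, smul_mul_assoc, smul_sum]

theorem derivationBracket_smul_right (r : R) (f g : A) :
    derivationBracket D p f (r • g) = r • derivationBracket D p f g := by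
  simp only [derivationBracket, Derivation.map_smul, mul_smul_comm, smul_sum]

theorem derivationBracket_mul_right (f g h : A) :
    derivationBracket D p f (g * h) =
      derivationBracket D p f g * h + g * derivationBracket D p f h := by
  simp only [derivationBracket, Derivation.leibniz, smul_eq_mul, sum_mul, mul_sum,
    ← sum_add_distrib]
  exact sum_congr rfl fun i _ => sum_congr rfl fun j _ => by ring

variable {D} {I : Ideal A}

theorem derivationBracket_mem_of_mem_left (hI : ∀ i, ∀ f ∈ I, D i f ∈ I) {f : A} (hf : f ∈ I)
    (g : A) : derivationBracket D p f g ∈ I :=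
  sum_mem fun i _ => sum_mem fun _ _ => I.mul_mem_right _ (I.mul_mem_left _ (hI i f hf))

theorem derivationBracket_mem_of_mem_right (hI : ∀ i, ∀ f ∈ I, D i f ∈ I) (f : A) {g : A}
    (hg : g ∈ I) : derivationBracket D p f g ∈ I :=
  sum_mem fun _ _ => sum_mem fun j _ => I.mul_mem_left _ (hI j g hg)

theorem derivationBracket_sub_mem (hI : ∀ i, ∀ f ∈ I, D i f ∈ I) {f f' g g' : A}
    (hf : f - f' ∈ I) (hg : g - g' ∈ I) :
    derivationBracket D p f g - derivationBracket D p f' g' ∈ I := by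
  have hsplit : derivationBracket D p f g - derivationBracket D p f' g' =
      derivationBracket D p (f - f') g + derivationBracket D p f' (g - g') := by
    rw [derivationBracket_sub_left, derivationBracket_sub_right]
    abel
  rw [hsplit]
  exact I.add_mem (derivationBracket_mem_of_mem_left p hI hf g)
    (derivationBracket_mem_of_mem_right p hI f' hg)

variable (D I) in
def quotientBracket (hI : ∀ i, ∀ f ∈ I, D i f ∈ I) : A ⧸ I → A ⧸ I → A ⧸ I :=
  Quotient.map₂ (derivationBracket D p) fun _ _ hf _ _ hg =>
    (Submodule.quotientRel_def I).2 (derivationBracket_sub_mem p hI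
      ((Submodule.quotientRel_def I).1 hf) ((Submodule.quotientRel_def I).1 hg))

variable (hI : ∀ i, ∀ f ∈ I, D i f ∈ I)

theorem quotientBracket_mk (f g : A) :
    quotientBracket D p I hI (Ideal.Quotient.mk I f) (Ideal.Quotient.mk I g) =
      Ideal.Quotient.mk I (derivationBracket D p f g) :=
  rfl

theorem quotientBracket_add_left (F F' G : A ⧸ I) :
    quotientBracket D p I hI (F + F') G =
      quotientBracket D p I hI F G + quotientBracket D p I hI F' G := by
  obtain ⟨f, rfl⟩ := Ideal.Quotient.mk_surjective F
  obtain ⟨f', rfl⟩ := Ideal.Quotient.mk_surjective F'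
  obtain ⟨g, rfl⟩ := Ideal.Quotient.mk_surjective G
  simp only [← map_add, quotientBracket_mk, derivationBracket_add_left]

theorem quotientBracket_add_right (F G G' : A ⧸ I) :
    quotientBracket D p I hI F (G + G') =
      quotientBracket D p I hI F G + quotientBracket D p I hI F G' := by
  obtain ⟨f, rfl⟩ := Ideal.Quotient.mk_surjective F
  obtain ⟨g, rfl⟩ := Ideal.Quotient.mk_surjective G
  obtain ⟨g', rfl⟩ := Ideal.Quotient.mk_surjective G'
  simp only [← map_add, quotientBracket_mk, derivationBracket_add_right]

theorem quotientBracket_smul_left (r : R) (F G : A ⧸ I) :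
    quotientBracket D p I hI (r • F) G = r • quotientBracket D p I hI F G := by
  obtain ⟨f, rfl⟩ := Ideal.Quotient.mk_surjective F
  obtain ⟨g, rfl⟩ := Ideal.Quotient.mk_surjective G
  exact congrArg (Ideal.Quotient.mk I) (derivationBracket_smul_left D p r f g)

theorem quotientBracket_smul_right (r : R) (F G : A ⧸ I) :
    quotientBracket D p I hI F (r • G) = r • quotientBracket D p I hI F G := by
  obtain ⟨f, rfl⟩ := Ideal.Quotient.mk_surjective F
  obtain ⟨g, rfl⟩ := Ideal.Quotient.mk_surjective G
  exact congrArg (Ideal.Quotient.mk I) (derivationBracket_smul_right D p r f g)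

theorem quotientBracket_mul_right (F G H : A ⧸ I) :
    quotientBracket D p I hI F (G * H) =
      quotientBracket D p I hI F G * H + G * quotientBracket D p I hI F H := by
  obtain ⟨f, rfl⟩ := Ideal.Quotient.mk_surjective F
  obtain ⟨g, rfl⟩ := Ideal.Quotient.mk_surjective G
  obtain ⟨h, rfl⟩ := Ideal.Quotient.mk_surjective H
  simp only [← map_mul, quotientBracket_mk, derivationBracket_mul_right, map_add]

theorem quotientBracket_jacobi
    (hJ : ∀ f g h : A, derivationBracket D p (derivationBracket D p f g) h +
      derivationBracket D p (derivationBracket D p h f) g +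
      derivationBracket D p (derivationBracket D p g h) f = 0)
    (F G H : A ⧸ I) :
    quotientBracket D p I hI (quotientBracket D p I hI F G) H +
      quotientBracket D p I hI (quotientBracket D p I hI H F) G +
      quotientBracket D p I hI (quotientBracket D p I hI G H) F = 0 := by
  obtain ⟨f, rfl⟩ := Ideal.Quotient.mk_surjective F
  obtain ⟨g, rfl⟩ := Ideal.Quotient.mk_surjective G
  obtain ⟨h, rfl⟩ := Ideal.Quotient.mk_surjective H
  simp only [quotientBracket_mk, ← map_add, hJ, map_zero]

end DerivationBracket

section PartialDeriv

variable {n : ℕ} {f g : (Fin n → ℝ) → ℝ} (i : Fin n)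

theorem partialDeriv_add (hf : Differentiable ℝ f) (hg : Differentiable ℝ g) :
    partialDeriv i (f + g) = partialDeriv i f + partialDeriv i g := by
  ext x
  simp [partialDeriv, fderiv_add (hf x) (hg x)]

theorem partialDeriv_const_smul (hf : Differentiable ℝ f) (r : ℝ) :
    partialDeriv i (r • f) = r • partialDeriv i f := by
  ext x
  simp [partialDeriv, fderiv_const_smul (hf x)]

theorem partialDeriv_mul (hf : Differentiable ℝ f) (hg : Differentiable ℝ g) :
    partialDeriv i (f * g) = f * partialDeriv i g + g * partialDeriv i f := by
  ext x
  simp [partialDeriv, fderiv_mul (hf x) (hg x)]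

theorem contDiff_partialDeriv (hf : ContDiff ℝ ∞ f) : ContDiff ℝ ∞ (partialDeriv i f) :=
  (hf.fderiv_right (by exact_mod_cast le_top)).clm_apply contDiff_const

theorem isFlatOn_partialDeriv {X : Set (Fin n → ℝ)} (hf : ContDiff ℝ ∞ f)
    (hflat : IsFlatOn X f) :
    IsFlatOn X (partialDeriv i f) := by
  intro k x hx
  have hfderiv : iteratedFDeriv ℝ k (fderiv ℝ f) x = 0 := by
    rw [← norm_eq_zero, norm_iteratedFDeriv_fderiv, hflat (k + 1) x hx, norm_zero]
  have hcomp : partialDeriv i f = ContinuousLinearMap.apply ℝ ℝ (Pi.single i 1) ∘ fderiv ℝ f :=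
    rfl
  have hsmooth : ContDiff ℝ ∞ (fderiv ℝ f) := hf.fderiv_right (by exact_mod_cast le_top)
  rw [hcomp, ContinuousLinearMap.iteratedFDeriv_comp_left _ hsmooth.contDiffAt
    (by exact_mod_cast le_top), hfderiv]
  ext
  simp

end PartialDeriv

section SmoothAlg

variable {n : ℕ}

theorem differentiable_of_mem_smoothAlg (f : smoothAlg n) :
    Differentiable ℝ (f : (Fin n → ℝ) → ℝ) :=
  (mem_smoothAlg f.2).differentiable (by simp)

def smoothPartialDeriv (i : Fin n) : Derivation ℝ (smoothAlg n) (smoothAlg n) :=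
  Derivation.mk'
    { toFun f := ⟨partialDeriv i f, contDiff_partialDeriv i (mem_smoothAlg f.2)⟩
      map_add' f g := Subtype.ext (partialDeriv_add i (differentiable_of_mem_smoothAlg f)
        (differentiable_of_mem_smoothAlg g))
      map_smul' r f :=
        Subtype.ext (partialDeriv_const_smul i (differentiable_of_mem_smoothAlg f) r) }
    fun f g => Subtype.ext (partialDeriv_mul i (differentiable_of_mem_smoothAlg f)
      (differentiable_of_mem_smoothAlg g))

theorem coe_smoothPartialDeriv (i : Fin n) (f : smoothAlg n) :
    (smoothPartialDeriv i f : (Fin n → ℝ) → ℝ) = partialDeriv i f :=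
  rfl

theorem smoothPartialDeriv_mem_flatIdeal {X : Set (Fin n → ℝ)} (i : Fin n) {f : smoothAlg n}
    (hf : f ∈ flatIdeal n X) : smoothPartialDeriv i f ∈ flatIdeal n X :=
  isFlatOn_partialDeriv i (mem_smoothAlg f.2) hf

theorem coe_derivationBracket_smoothPartialDeriv (p : Fin n → Fin n → smoothAlg n)
    (f g : smoothAlg n) :
    ((derivationBracket smoothPartialDeriv p f g : smoothAlg n) : (Fin n → ℝ) → ℝ) =
      pBracket (fun i j => p i j) f g := by
  ext x
  simp [derivationBracket, pBracket, coe_smoothPartialDeriv]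

end SmoothAlg

theorem whitney_poisson_descends_general (n : ℕ) (X : Set (Fin n → ℝ))
    (P : Fin n → Fin n → (Fin n → ℝ) → ℝ)
    (hP : ∀ i j, ContDiff ℝ ∞ (P i j))
    (hJacobi : ∀ f g h : (Fin n → ℝ) → ℝ, ContDiff ℝ ∞ f → ContDiff ℝ ∞ g →
      ContDiff ℝ ∞ h →
      pBracket P (pBracket P f g) h + pBracket P (pBracket P h f) g
        + pBracket P (pBracket P g h) f = 0) :
    ∃ B : Whitney n X → Whitney n X → Whitney n X,
      -- the bracket descends: `B` is induced by `{-,-}` (well-definedness)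
      (∀ (f g : smoothAlg n) (hfg : pBracket P f g ∈ smoothAlg n),
        B (Ideal.Quotient.mk (flatIdeal n X) f) (Ideal.Quotient.mk (flatIdeal n X) g) =
          Ideal.Quotient.mk (flatIdeal n X) ⟨pBracket P f g, hfg⟩) ∧
      -- ℝ-bilinearity
      (∀ F F' G, B (F + F') G = B F G + B F' G) ∧
      (∀ F G G', B F (G + G') = B F G + B F G') ∧
      (∀ (r : ℝ) (F G : Whitney n X), B (r • F) G = r • B F G) ∧
      (∀ (r : ℝ) (F G : Whitney n X), B F (r • G) = r • B F G) ∧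
      -- Leibniz rule
      (∀ F G H, B F (G * H) = B F G * H + G * B F H) ∧
      -- Jacobi identity
      (∀ F G H, B (B F G) H + B (B H F) G + B (B G H) F = 0) := by
  let p : Fin n → Fin n → smoothAlg n := fun i j => ⟨P i j, hP i j⟩
  have hcoe : ∀ f g : smoothAlg n,
      ((derivationBracket smoothPartialDeriv p f g : smoothAlg n) : (Fin n → ℝ) → ℝ) =
        pBracket P f g :=
    coe_derivationBracket_smoothPartialDeriv p
  have hI : ∀ i, ∀ f ∈ flatIdeal n X, smoothPartialDeriv i f ∈ flatIdeal n X :=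
    fun i _ => smoothPartialDeriv_mem_flatIdeal i
  refine ⟨quotientBracket smoothPartialDeriv p (flatIdeal n X) hI,
    fun f g _ => congrArg _ (Subtype.ext (hcoe f g)),
    quotientBracket_add_left p hI, quotientBracket_add_right p hI,
    quotientBracket_smul_left p hI, quotientBracket_smul_right p hI,
    quotientBracket_mul_right p hI, quotientBracket_jacobi p hI fun f g h => ?_⟩
  apply Subtype.ext
  simp only [AddMemClass.coe_add, hcoe]
  exact hJacobi f g h (mem_smoothAlg f.2) (mem_smoothAlg g.2) (mem_smoothAlg h.2)

set_option synthInstance.maxHeartbeats 500000 in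
set_option maxHeartbeats 1000000 in
/-- Existence of the global Whitney–Poisson structure: a smooth antisymmetric bivector
whose bracket satisfies the Jacobi identity induces, for every closed `X ⊆ ℝ^n`, a
well-defined ℝ-bilinear bracket on the quotient ring `E^∞(X)` satisfying the Leibniz
rule and the Jacobi identity. -/
theorem whitney_poisson_descends (n : ℕ) (X : Set (Fin n → ℝ)) (hX : IsClosed X)
    (P : Fin n → Fin n → (Fin n → ℝ) → ℝ)
    (hP : ∀ i j, ContDiff ℝ ∞ (P i j))
    (hPanti : ∀ i j x, P i j x = - P j i x)
    (hJacobi : ∀ f g h : (Fin n → ℝ) → ℝ, ContDiff ℝ ∞ f → ContDiff ℝ ∞ g →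
      ContDiff ℝ ∞ h →
      pBracket P (pBracket P f g) h + pBracket P (pBracket P h f) g
        + pBracket P (pBracket P g h) f = 0) :
    ∃ B : Whitney n X → Whitney n X → Whitney n X,
      -- the bracket descends: `B` is induced by `{-,-}` (well-definedness)
      (∀ (f g : smoothAlg n) (hfg : pBracket P f g ∈ smoothAlg n),
        B (Ideal.Quotient.mk (flatIdeal n X) f) (Ideal.Quotient.mk (flatIdeal n X) g) =
          Ideal.Quotient.mk (flatIdeal n X) ⟨pBracket P f g, hfg⟩) ∧
      -- ℝ-bilinearity
      (∀ F F' G, B (F + F') G = B F G + B F' G) ∧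
      (∀ F G G', B F (G + G') = B F G + B F G') ∧
      (∀ (r : ℝ) (F G : Whitney n X), B (r • F) G = r • B F G) ∧
      (∀ (r : ℝ) (F G : Whitney n X), B F (r • G) = r • B F G) ∧
      -- Leibniz rule
      (∀ F G H, B F (G * H) = B F G * H + G * B F H) ∧
      -- Jacobi identity
      (∀ F G H, B (B F G) H + B (B H F) G + B (B G H) F = 0) :=
  whitney_poisson_descends_general n X P hP hJacobi
end
end

section
/- The Moyal–Weyl product respects the Fedosov filtration: for a nonzero element a of A = MvPolynomial (Fin m ⊕ Fin m) (Polynomial ℂ), define its Fedosov degree deg_F(a) as the minimum over all monomials occurring in a of (total degree in the variables q_i, p_i) + 2·(lowest ħ-degree of the corresponding coefficient in ℂ[ħ]). Then for the Moyal–Weyl product ∘, deg_F(a ∘ b) ≥ deg_F(a) + deg_F(b) whenever a ∘ b ≠ 0; equivalently, with F^s = span of monomials of Fedosov degree ≥ s, one has F^s ∘ F^t ⊆ F^{s+t}. -/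
open TensorProduct

noncomputable section

/-- The phase-space polynomial algebra `A = ℂ[ħ][q_1,…,q_m,p_1,…,p_m]`:
multivariate polynomials in the `2m` variables indexed by `Fin m ⊕ Fin m`
(where `Sum.inl i` indexes `q_i` and `Sum.inr i` indexes `p_i`) with
coefficients in `ℂ[ħ] = Polynomial ℂ`. -/
abbrev PhaseAlg (m : ℕ) := MvPolynomial (Fin m ⊕ Fin m) (Polynomial ℂ)

/-- Instance search no longer finds this in current Mathlib; it is the same instance
`LinearMap.addCommGroup` built on `TensorProduct.addCommGroup`. -/
instance phaseAlgTensorEndAddCommGroup (m : ℕ) :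
    AddCommGroup (PhaseAlg m ⊗[Polynomial ℂ] PhaseAlg m →ₗ[Polynomial ℂ]
      PhaseAlg m ⊗[Polynomial ℂ] PhaseAlg m) :=
  @LinearMap.addCommGroup _ _ _ _ _ _ _
    (@TensorProduct.addCommGroup (Polynomial ℂ) _ (PhaseAlg m) (PhaseAlg m) _ _ _ _) _ _ _

/-- The Poisson bivector operator
`Π̂ = Σ_i (∂_{q_i} ⊗ ∂_{p_i} − ∂_{p_i} ⊗ ∂_{q_i})` on `A ⊗ A`. -/
def PiHat (m : ℕ) :
    PhaseAlg m ⊗[Polynomial ℂ] PhaseAlg m →ₗ[Polynomial ℂ]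
      PhaseAlg m ⊗[Polynomial ℂ] PhaseAlg m :=
  ∑ i : Fin m,
    ((TensorProduct.map (MvPolynomial.pderiv (Sum.inl i)).toLinearMap
        (MvPolynomial.pderiv (Sum.inr i)).toLinearMap :
        PhaseAlg m ⊗[Polynomial ℂ] PhaseAlg m →ₗ[Polynomial ℂ]
          PhaseAlg m ⊗[Polynomial ℂ] PhaseAlg m)
      - (TensorProduct.map (MvPolynomial.pderiv (Sum.inr i)).toLinearMap
        (MvPolynomial.pderiv (Sum.inl i)).toLinearMap :
        PhaseAlg m ⊗[Polynomial ℂ] PhaseAlg m →ₗ[Polynomial ℂ]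
          PhaseAlg m ⊗[Polynomial ℂ] PhaseAlg m))

/-- The Moyal--Weyl star product
`a ∘ b = Σ_{k ≥ 0} ((−iħ)^k / k!) · μ(Π̂^k(a ⊗ b))`; the sum is finite since
`Π̂^k (a ⊗ b) = 0` as soon as `k` exceeds the total degrees of `a` and `b`, so it
may be truncated at `k = totalDegree a + totalDegree b`. -/
def moyal {m : ℕ} (a b : PhaseAlg m) : PhaseAlg m :=
  ∑ k ∈ Finset.range (a.totalDegree + b.totalDegree + 1),
    ((k.factorial : ℂ)⁻¹ * (-Complex.I) ^ k) •
      (MvPolynomial.C (Polynomial.X ^ k) *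
        LinearMap.mul' (Polynomial ℂ) (PhaseAlg m) ((PiHat m ^ k) (a ⊗ₜ[Polynomial ℂ] b)))


/-- `a` lies in the Fedosov filtration step `F^s`: every monomial `q^d p^e ħ^j`
occurring in `a` satisfies `|d| + 2j ≥ s`, where `|d|` is the total degree in the
variables `q_i, p_i` and `j` is the `ħ`-degree. -/
def FedosovGE {m : ℕ} (s : ℕ) (a : PhaseAlg m) : Prop :=
  ∀ (d : (Fin m ⊕ Fin m) →₀ ℕ) (j : ℕ),
    (MvPolynomial.coeff d a).coeff j ≠ 0 → s ≤ d.sum (fun _ e => e) + 2 * j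

/-! Give each variable `q_i`, `p_i` weight `1` and `ħ` weight `2`. Multiplication and
`ℂ[ħ]`-scaling do not lower the weight, a partial derivative lowers it by at most `1`,
so each application of `Π̂`, which differentiates both tensor factors once, lowers it by at
most `2`, and the factor `ħ ^ k` accompanying `Π̂ ^ k` restores exactly `2 k`. -/

open scoped Polynomial

theorem Polynomial.exists_coeff_ne_zero_of_coeff_mul_ne_zero {R : Type*} [Semiring R]
    {p q : R[X]} {n : ℕ} (h : (p * q).coeff n ≠ 0) :
    ∃ i j, i + j = n ∧ p.coeff i ≠ 0 ∧ q.coeff j ≠ 0 := by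
  rw [Polynomial.coeff_mul] at h
  obtain ⟨x, hx, hne⟩ := Finset.exists_ne_zero_of_sum_ne_zero h
  exact ⟨x.1, x.2, Finset.HasAntidiagonal.mem_antidiagonal.mp hx, left_ne_zero_of_mul hne,
    right_ne_zero_of_mul hne⟩

namespace MvPolynomial

variable {σ R : Type*} [CommSemiring R]

variable (σ R) in
def fedosovFiltration (s : ℕ) : Submodule R[X] (MvPolynomial σ R[X]) where
  carrier := {a | ∀ d j, ((a.coeff d).coeff j ≠ 0 → s ≤ d.degree + 2 * j)}
  zero_mem' := by simp
  add_mem' {a b} ha hb d j h := by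
    rw [coeff_add, Polynomial.coeff_add] at h
    by_cases ha₀ : (a.coeff d).coeff j = 0
    · exact hb d j (by simpa [ha₀] using h)
    · exact ha d j ha₀
  smul_mem' c a ha d j h := by
    rw [coeff_smul, smul_eq_mul] at h
    obtain ⟨i, j', hj, -, hj'⟩ := Polynomial.exists_coeff_ne_zero_of_coeff_mul_ne_zero h
    have := ha d j' hj'
    omega

theorem fedosovFiltration_antitone : Antitone (fedosovFiltration σ R) :=
  fun _ _ hst _ ha d j h => hst.trans (ha d j h)

theorem mul_mem_fedosovFiltration {s t : ℕ} {a b : MvPolynomial σ R[X]}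
    (ha : a ∈ fedosovFiltration σ R s) (hb : b ∈ fedosovFiltration σ R t) :
    a * b ∈ fedosovFiltration σ R (s + t) := by
  classical
  intro d j h
  rw [coeff_mul, Polynomial.finsetSum_coeff] at h
  obtain ⟨⟨d₁, d₂⟩, hd, hne⟩ := Finset.exists_ne_zero_of_sum_ne_zero h
  obtain ⟨j₁, j₂, hj, h₁, h₂⟩ := Polynomial.exists_coeff_ne_zero_of_coeff_mul_ne_zero hne
  have hdeg : d.degree = d₁.degree + d₂.degree := by
    rw [← Finset.HasAntidiagonal.mem_antidiagonal.mp hd, map_add]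
  have := ha d₁ j₁ h₁
  have := hb d₂ j₂ h₂
  omega

theorem C_X_pow_mem_fedosovFiltration (k : ℕ) :
    C (Polynomial.X ^ k) ∈ fedosovFiltration σ R (2 * k) := by
  classical
  intro d j h
  rw [coeff_C] at h
  split_ifs at h with hd
  · rw [Polynomial.coeff_X_pow, ite_ne_right_iff] at h
    simp [← hd, h.1]
  · simp at h

theorem pderiv_mem_fedosovFiltration {s : ℕ} (v : σ) {a : MvPolynomial σ R[X]}
    (ha : a ∈ fedosovFiltration σ R s) : pderiv v a ∈ fedosovFiltration σ R (s - 1) := by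
  intro d j h
  rw [coeff_pderiv] at h
  obtain ⟨i, j', hj, hi, -⟩ := Polynomial.exists_coeff_ne_zero_of_coeff_mul_ne_zero h
  have hdeg : (d + Finsupp.single v 1).degree = d.degree + 1 := by
    rw [map_add, Finsupp.degree_single]
  have := ha _ i hi
  omega

open TensorProduct

variable (σ R) in
def tensorFedosovFiltration (n : ℕ) :
    Submodule R[X] (MvPolynomial σ R[X] ⊗[R[X]] MvPolynomial σ R[X]) :=
  Submodule.span R[X] {x | ∃ s t, n ≤ s + t ∧
    ∃ a ∈ fedosovFiltration σ R s, ∃ b ∈ fedosovFiltration σ R t, a ⊗ₜ b = x}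

theorem tmul_mem_tensorFedosovFiltration {n s t : ℕ} {a b : MvPolynomial σ R[X]}
    (ha : a ∈ fedosovFiltration σ R s) (hb : b ∈ fedosovFiltration σ R t) (hn : n ≤ s + t) :
    a ⊗ₜ b ∈ tensorFedosovFiltration σ R n :=
  Submodule.subset_span ⟨s, t, hn, a, ha, b, hb, rfl⟩

theorem map_mem_of_mem_tensorFedosovFiltration {M : Type*} [AddCommMonoid M] [Module R[X] M]
    {n : ℕ} {f : MvPolynomial σ R[X] ⊗[R[X]] MvPolynomial σ R[X] →ₗ[R[X]] M}
    {P : Submodule R[X] M}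
    (hf : ∀ s t a b, n ≤ s + t → a ∈ fedosovFiltration σ R s → b ∈ fedosovFiltration σ R t →
      f (a ⊗ₜ b) ∈ P)
    {x : MvPolynomial σ R[X] ⊗[R[X]] MvPolynomial σ R[X]}
    (hx : x ∈ tensorFedosovFiltration σ R n) : f x ∈ P := by
  suffices tensorFedosovFiltration σ R n ≤ P.comap f from this hx
  rw [tensorFedosovFiltration, Submodule.span_le]
  rintro _ ⟨s, t, hn, a, ha, b, hb, rfl⟩
  exact hf s t a b hn ha hb

theorem map_pderiv_mem_tensorFedosovFiltration {n : ℕ} (u v : σ)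
    {x : MvPolynomial σ R[X] ⊗[R[X]] MvPolynomial σ R[X]}
    (hx : x ∈ tensorFedosovFiltration σ R n) :
    TensorProduct.map (pderiv u).toLinearMap (pderiv v).toLinearMap x ∈
      tensorFedosovFiltration σ R (n - 2) := by
  refine map_mem_of_mem_tensorFedosovFiltration (fun _ _ _ _ hn ha hb => ?_) hx
  rw [map_tmul]
  exact tmul_mem_tensorFedosovFiltration (pderiv_mem_fedosovFiltration u ha)
    (pderiv_mem_fedosovFiltration v hb) (by omega)

theorem mul'_mem_fedosovFiltration {n : ℕ}
    {x : MvPolynomial σ R[X] ⊗[R[X]] MvPolynomial σ R[X]}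
    (hx : x ∈ tensorFedosovFiltration σ R n) :
    LinearMap.mul' R[X] (MvPolynomial σ R[X]) x ∈ fedosovFiltration σ R n := by
  refine map_mem_of_mem_tensorFedosovFiltration (fun _ _ _ _ hn ha hb => ?_) hx
  rw [LinearMap.mul'_apply]
  exact fedosovFiltration_antitone hn (mul_mem_fedosovFiltration ha hb)

end MvPolynomial

open MvPolynomial

theorem piHat_mem_tensorFedosovFiltration {m n : ℕ} {x : PhaseAlg m ⊗[Polynomial ℂ] PhaseAlg m}
    (hx : x ∈ tensorFedosovFiltration (Fin m ⊕ Fin m) ℂ n) :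
    PiHat m x ∈ tensorFedosovFiltration (Fin m ⊕ Fin m) ℂ (n - 2) := by
  rw [PiHat, LinearMap.sum_apply]
  refine Submodule.sum_mem _ fun i _ => ?_
  -- instance search does not find the additive group structure that `PiHat` subtracts in
  let : AddCommGroup (PhaseAlg m ⊗[Polynomial ℂ] PhaseAlg m) := TensorProduct.addCommGroup
  exact sub_mem (map_pderiv_mem_tensorFedosovFiltration _ _ hx)
    (map_pderiv_mem_tensorFedosovFiltration _ _ hx)

theorem piHat_pow_mem_tensorFedosovFiltration {m n : ℕ} (k : ℕ)
    {x : PhaseAlg m ⊗[Polynomial ℂ] PhaseAlg m}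
    (hx : x ∈ tensorFedosovFiltration (Fin m ⊕ Fin m) ℂ n) :
    (PiHat m ^ k) x ∈ tensorFedosovFiltration (Fin m ⊕ Fin m) ℂ (n - 2 * k) := by
  induction k generalizing n x with
  | zero => simpa using hx
  | succ k ih =>
    rw [pow_succ, Module.End.mul_apply, show n - 2 * (k + 1) = n - 2 - 2 * k by omega]
    exact ih (piHat_mem_tensorFedosovFiltration hx)

/-- The Moyal--Weyl product respects the Fedosov filtration:
`F^s ∘ F^t ⊆ F^{s+t}`; equivalently `deg_F (a ∘ b) ≥ deg_F a + deg_F b`. -/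
theorem moyal_fedosov_filtration (m : ℕ) (s t : ℕ) (a b : PhaseAlg m)
    (ha : FedosovGE s a) (hb : FedosovGE t b) :
    FedosovGE (s + t) (moyal a b) := by
  have hab := tmul_mem_tensorFedosovFiltration ha hb le_rfl
  change moyal a b ∈ fedosovFiltration (Fin m ⊕ Fin m) ℂ (s + t)
  refine Submodule.sum_mem _ fun k _ => Submodule.smul_of_tower_mem _ _ ?_
  refine fedosovFiltration_antitone ?_ <| mul_mem_fedosovFiltration
    (C_X_pow_mem_fedosovFiltration k)
    (mul'_mem_fedosovFiltration (piHat_pow_mem_tensorFedosovFiltration k hab))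
  omega
end
end
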